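/- Let A ⊆ ℝ be open and invex w.r.t. η satisfying Condition C, a, b ∈ A with a < a + η(b,a), f differentiable with f' integrable on [a, a+η(b,a)], and |f'|^q preinvex there for some q > 1 with conjugate p. Then |f(a + η(b,a)/2) - (1/η(b,a)) ∫_a^{a+η(b,a)} f(u) du| ≤ (1/(p+1))^{1/p} (η(b,a)/4) [ ((3|f'(a)|^q + |f'(a+η(b,a))|^q)/4)^{1/q} + ((3|f'(a+η(b,a))|^q + |f'(a)|^q)/4)^{1/q} ]. -/

import Mathlib

/-!
Condition C at `t = 1` gives `η a (a + η b a) = -η b a`, so preinvexity of `|f'| ^ q` along the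
segment from `a + η b a` back to `a` bounds `|f'| ^ q` by its chord on `[a, a + η b a]`.
Integrating by parts against the kernel `u - a` on the left half and `u - (a + η b a)` on the
right half writes the midpoint error as a sum of two integrals of `f'`. Hölder's inequality on
each half, with `∫ |kernel| ^ p = (η b a / 2) ^ (p + 1) / (p + 1)` and the chord integrated over
that half, gives the two terms of the bound.
-/

open MeasureTheory intervalIntegral Set

def IsInvex (η : ℝ → ℝ → ℝ) (A : Set ℝ) : Prop :=
  ∀ x ∈ A, ∀ y ∈ A, ∀ t ∈ Icc (0:ℝ) 1, x + t * η y x ∈ A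

def PreinvexOn (η : ℝ → ℝ → ℝ) (s : Set ℝ) (g : ℝ → ℝ) : Prop :=
  ∀ x ∈ s, ∀ y ∈ s, ∀ t ∈ Icc (0:ℝ) 1, g (x + t * η y x) ≤ (1 - t) * g x + t * g y

theorem IsInvex.Icc_subset {η : ℝ → ℝ → ℝ} {A : Set ℝ} (hA : IsInvex η A) {a b : ℝ}
    (ha : a ∈ A) (hb : b ∈ A) (hη : 0 < η b a) : Icc a (a + η b a) ⊆ A := by
  intro u hu
  have ht : (u - a) / η b a ∈ Icc (0:ℝ) 1 :=
    ⟨div_nonneg (by linarith [hu.1]) hη.le, (div_le_one hη).2 (by linarith [hu.2])⟩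
  simpa [div_mul_cancel₀ _ hη.ne'] using hA a ha b hb _ ht

theorem PreinvexOn.le_chord {η : ℝ → ℝ → ℝ} {g : ℝ → ℝ} {a h : ℝ}
    (hg : PreinvexOn η (Icc a (a + h)) g) (hh : 0 < h) (hη : η a (a + h) = -h) {u : ℝ}
    (hu : u ∈ Icc a (a + h)) : g u ≤ ((a + h - u) * g a + (u - a) * g (a + h)) / h := by
  have ht : (a + h - u) / h ∈ Icc (0:ℝ) 1 :=
    ⟨div_nonneg (by linarith [hu.2]) hh.le, (div_le_one hh).2 (by linarith [hu.1])⟩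
  have key := hg (a + h) ⟨by linarith, le_rfl⟩ a ⟨le_rfl, by linarith⟩ _ ht
  have hpt : a + h + (a + h - u) / h * η a (a + h) = u := by rw [hη]; field_simp; ring
  rw [hpt] at key
  calc g u ≤ _ := key
    _ = _ := by field_simp; ring

theorem integral_chord {a h A B α β : ℝ} (hh : h ≠ 0) :
    ∫ u in α..β, ((a + h - u) * A + (u - a) * B) / h =
      (β - α) * (((a + h) * A - a * B) / h) + (β ^ 2 - α ^ 2) / 2 * ((B - A) / h) := by
  have hlin : ∀ u, ((a + h - u) * A + (u - a) * B) / h =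
      ((a + h) * A - a * B) / h + u * ((B - A) / h) := fun u => by field_simp; ring
  simp only [hlin]
  rw [intervalIntegral.integral_add intervalIntegrable_const
      ((by fun_prop : Continuous fun u : ℝ => u * ((B - A) / h)).intervalIntegrable _ _),
    intervalIntegral.integral_const, intervalIntegral.integral_mul_const, integral_id, smul_eq_mul]

theorem integral_chord_left_half {a h A B : ℝ} (hh : h ≠ 0) :
    ∫ u in a..a + h / 2, ((a + h - u) * A + (u - a) * B) / h = h / 2 * ((3 * A + B) / 4) := by
  rw [integral_chord hh]
  field_simp
  ring

theorem integral_chord_right_half {a h A B : ℝ} (hh : h ≠ 0) :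
    ∫ u in a + h / 2..a + h, ((a + h - u) * A + (u - a) * B) / h = h / 2 * ((3 * B + A) / 4) := by
  rw [integral_chord hh]
  field_simp
  ring

theorem memLp_of_abs_rpow_le {X : Type*} [MeasurableSpace X] {μ : Measure X} {g ℓ : X → ℝ}
    {q : ℝ} (hq : 0 < q) (hg : AEStronglyMeasurable g μ) (hℓ : Integrable ℓ μ)
    (hle : ∀ᵐ x ∂μ, |g x| ^ q ≤ ℓ x) : MemLp g (ENNReal.ofReal q) μ := by
  refine (integrable_norm_rpow_iff hg (by simpa using hq) ENNReal.ofReal_ne_top).1 ?_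
  rw [ENNReal.toReal_ofReal hq.le]
  refine hℓ.mono' ((Real.continuous_rpow_const hq.le).comp_aestronglyMeasurable hg.norm) ?_
  filter_upwards [hle] with x hx
  simpa [Real.norm_eq_abs, abs_of_nonneg (Real.rpow_nonneg (abs_nonneg (g x)) q)] using hx

theorem integral_sub_mul_deriv {f f' : ℝ → ℝ} {α β : ℝ}
    (hf : ∀ x ∈ uIcc α β, HasDerivAt f (f' x) x) (hf' : IntervalIntegrable f' volume α β)
    (x₀ : ℝ) :
    ∫ u in α..β, (u - x₀) * f' u =
      (β - x₀) * f β - (α - x₀) * f α - ∫ u in α..β, f u := by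
  simpa using integral_mul_deriv_eq_deriv_mul (fun x _ => (hasDerivAt_id x).sub_const x₀) hf
    intervalIntegrable_const hf'

theorem montgomery_identity {f f' : ℝ → ℝ} {a m c : ℝ} (ham : a ≤ m) (hmc : m ≤ c)
    (hf : ∀ x ∈ Icc a c, HasDerivAt f (f' x) x) (hf' : IntervalIntegrable f' volume a c) :
    (c - a) * f m - ∫ u in a..c, f u =
      (∫ u in a..m, (u - a) * f' u) + ∫ u in m..c, (u - c) * f' u := by
  have hl : Icc a m ⊆ Icc a c := Icc_subset_Icc le_rfl hmc
  have hr : Icc m c ⊆ Icc a c := Icc_subset_Icc ham le_rfl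
  have hfc : ContinuousOn f (Icc a c) := fun x hx => (hf x hx).continuousAt.continuousWithinAt
  rw [← integral_add_adjacent_intervals
      ((hfc.mono hl).intervalIntegrable_of_Icc ham) ((hfc.mono hr).intervalIntegrable_of_Icc hmc),
    integral_sub_mul_deriv (fun x hx => hf x (hl (uIcc_of_le ham ▸ hx)))
      (hf'.mono_set (by simpa [uIcc_of_le ham, uIcc_of_le (ham.trans hmc)] using hl)),
    integral_sub_mul_deriv (fun x hx => hf x (hr (uIcc_of_le hmc ▸ hx)))
      (hf'.mono_set (by simpa [uIcc_of_le hmc, uIcc_of_le (ham.trans hmc)] using hr))]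
  ring

theorem abs_intervalIntegral_mul_le_Lp_mul_Lq {p q α β : ℝ} {w g : ℝ → ℝ}
    (hpq : p.HolderConjugate q) (hαβ : α ≤ β) (hw : ContinuousOn w (Icc α β))
    (hg : MemLp g (ENNReal.ofReal q) (volume.restrict (Ioc α β))) :
    |∫ u in α..β, w u * g u| ≤
      (∫ u in α..β, |w u| ^ p) ^ (1 / p) * (∫ u in α..β, |g u| ^ q) ^ (1 / q) := by
  obtain ⟨C, hC⟩ := isCompact_Icc.exists_bound_of_continuousOn hw
  have hwLp : MemLp w (ENNReal.ofReal p) (volume.restrict (Ioc α β)) :=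
    MemLp.of_bound ((hw.mono Ioc_subset_Icc_self).aestronglyMeasurable measurableSet_Ioc) C
      ((ae_restrict_iff' measurableSet_Ioc).2
        (Filter.Eventually.of_forall fun u hu => hC u (Ioc_subset_Icc_self hu)))
  simp only [integral_of_le hαβ]
  calc |∫ u in Ioc α β, w u * g u| ≤ ∫ u in Ioc α β, ‖w u‖ * ‖g u‖ :=
        (MeasureTheory.abs_integral_le_integral_abs (f := fun u => w u * g u)).trans_eq
          (by simp only [abs_mul, Real.norm_eq_abs])
    _ ≤ _ := by
        simpa only [Real.norm_eq_abs] using integral_mul_norm_le_Lp_mul_Lq hpq hwLp hg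

theorem integral_abs_sub_left_rpow {p α β : ℝ} (hp : -1 < p) (hαβ : α ≤ β) :
    ∫ u in α..β, |u - α| ^ p = (β - α) ^ (p + 1) / (p + 1) := by
  rw [integral_congr (g := fun u => (u - α) ^ p) fun u hu => by
      rw [abs_of_nonneg (sub_nonneg.2 (uIcc_of_le hαβ ▸ hu).1)],
    integral_comp_sub_right (fun u => u ^ p), integral_rpow (Or.inl hp), sub_self,
    Real.zero_rpow (by linarith), sub_zero]

theorem integral_abs_sub_right_rpow {p α β : ℝ} (hp : -1 < p) (hαβ : α ≤ β) :
    ∫ u in α..β, |u - β| ^ p = (β - α) ^ (p + 1) / (p + 1) := by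
  rw [integral_congr (g := fun u => (β - u) ^ p) fun u hu => by
      rw [abs_sub_comm, abs_of_nonneg (sub_nonneg.2 (uIcc_of_le hαβ ▸ hu).2)],
    integral_comp_sub_left (fun u => u ^ p), integral_rpow (Or.inl hp), sub_self,
    Real.zero_rpow (by linarith), sub_zero]

theorem rpow_mul_rpow_of_holderConjugate {p q h K : ℝ} (hpq : p.HolderConjugate q)
    (hh : 0 ≤ h) (hK : 0 ≤ K) :
    (h ^ (p + 1) / (p + 1)) ^ (1 / p) * (h * K) ^ (1 / q) =
      (1 / (p + 1)) ^ (1 / p) * h ^ 2 * K ^ (1 / q) := by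
  have hp := hpq.pos
  have hexp : (p + 1) * (1 / p) + 1 / q = 2 := by
    have := hpq.one_div_add_one_div
    field_simp at this ⊢
    linarith
  rw [div_eq_mul_one_div (h ^ (p + 1)), Real.mul_rpow (by positivity) (by positivity),
    ← Real.rpow_mul hh, Real.mul_rpow hh hK]
  calc h ^ ((p + 1) * (1 / p)) * (1 / (p + 1)) ^ (1 / p) * (h ^ (1 / q) * K ^ (1 / q))
      = (1 / (p + 1)) ^ (1 / p) * (h ^ ((p + 1) * (1 / p)) * h ^ (1 / q)) * K ^ (1 / q) := by
        ring
    _ = _ := by rw [← Real.rpow_add' hh (by rw [hexp]; norm_num), hexp, Real.rpow_two]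

theorem abs_integral_mul_le_of_abs_rpow_le {p q α β K : ℝ} {w g ℓ : ℝ → ℝ}
    (hpq : p.HolderConjugate q) (hαβ : α ≤ β) (hw : ContinuousOn w (Icc α β))
    (hwp : ∫ u in α..β, |w u| ^ p = (β - α) ^ (p + 1) / (p + 1))
    (hg : AEStronglyMeasurable g (volume.restrict (Ioc α β)))
    (hℓ : ContinuousOn ℓ (Icc α β)) (hgℓ : ∀ u ∈ Icc α β, |g u| ^ q ≤ ℓ u)
    (hℓK : ∫ u in α..β, ℓ u = (β - α) * K) (hK : 0 ≤ K) :
    |∫ u in α..β, w u * g u| ≤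
      (1 / (p + 1)) ^ (1 / p) * (β - α) ^ 2 * K ^ (1 / q) := by
  have hq := hpq.symm.pos
  have hℓint : IntegrableOn ℓ (Ioc α β) := hℓ.integrableOn_Icc.mono_set Ioc_subset_Icc_self
  have hgℓ' : ∀ᵐ u ∂volume.restrict (Ioc α β), |g u| ^ q ≤ ℓ u :=
    (ae_restrict_iff' measurableSet_Ioc).2
      (Filter.Eventually.of_forall fun u hu => hgℓ u (Ioc_subset_Icc_self hu))
  have hgLp := memLp_of_abs_rpow_le hq hg hℓint hgℓ'
  have hgq₀ : 0 ≤ ∫ u in α..β, |g u| ^ q :=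
    integral_nonneg hαβ fun u _ => Real.rpow_nonneg (abs_nonneg _) q
  have hgq : ∫ u in α..β, |g u| ^ q ≤ (β - α) * K := by
    have hgqint := hgLp.integrable_norm_rpow'
    simp only [Real.norm_eq_abs, ENNReal.toReal_ofReal hq.le] at hgqint
    rw [← hℓK]
    exact integral_mono_on hαβ ((intervalIntegrable_iff_integrableOn_Ioc_of_le hαβ).2 hgqint)
      (hℓ.intervalIntegrable_of_Icc hαβ) hgℓ
  calc |∫ u in α..β, w u * g u|
      ≤ (∫ u in α..β, |w u| ^ p) ^ (1 / p) * (∫ u in α..β, |g u| ^ q) ^ (1 / q) :=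
        abs_intervalIntegral_mul_le_Lp_mul_Lq hpq hαβ hw hgLp
    _ ≤ ((β - α) ^ (p + 1) / (p + 1)) ^ (1 / p) * ((β - α) * K) ^ (1 / q) := by
        rw [hwp]
        refine mul_le_mul_of_nonneg_left (Real.rpow_le_rpow hgq₀ hgq hpq.symm.one_div_nonneg) ?_
        exact Real.rpow_nonneg (div_nonneg (Real.rpow_nonneg (sub_nonneg.2 hαβ) _)
          (by linarith [hpq.pos])) _
    _ = _ := rpow_mul_rpow_of_holderConjugate hpq (sub_nonneg.2 hαβ) hK

theorem abs_integral_left_half_le {p q a h A B : ℝ} {g : ℝ → ℝ} (hpq : p.HolderConjugate q)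
    (hh : 0 < h) (hg : AEStronglyMeasurable g (volume.restrict (Ioc a (a + h))))
    (hbound : ∀ u ∈ Icc a (a + h), |g u| ^ q ≤ ((a + h - u) * A + (u - a) * B) / h)
    (hA : 0 ≤ A) (hB : 0 ≤ B) :
    |∫ u in a..a + h / 2, (u - a) * g u| ≤
      (1 / (p + 1)) ^ (1 / p) * (h / 2) ^ 2 * ((3 * A + B) / 4) ^ (1 / q) := by
  simpa only [add_sub_cancel_left] using abs_integral_mul_le_of_abs_rpow_le (α := a)
    (β := a + h / 2) hpq (by linarith) (continuous_sub_right a).continuousOn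
    (integral_abs_sub_left_rpow (by linarith [hpq.pos]) (by linarith))
    (hg.mono_measure (Measure.restrict_mono (Ioc_subset_Ioc le_rfl (by linarith)) le_rfl))
    (by fun_prop) (fun u hu => hbound u ⟨hu.1, by linarith [hu.2]⟩)
    (by rw [add_sub_cancel_left]; exact integral_chord_left_half hh.ne') (by positivity)

theorem abs_integral_right_half_le {p q a h A B : ℝ} {g : ℝ → ℝ} (hpq : p.HolderConjugate q)
    (hh : 0 < h) (hg : AEStronglyMeasurable g (volume.restrict (Ioc a (a + h))))
    (hbound : ∀ u ∈ Icc a (a + h), |g u| ^ q ≤ ((a + h - u) * A + (u - a) * B) / h)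
    (hA : 0 ≤ A) (hB : 0 ≤ B) :
    |∫ u in a + h / 2..a + h, (u - (a + h)) * g u| ≤
      (1 / (p + 1)) ^ (1 / p) * (h / 2) ^ 2 * ((3 * B + A) / 4) ^ (1 / q) := by
  have hlen : a + h - (a + h / 2) = h / 2 := by ring
  simpa only [hlen] using abs_integral_mul_le_of_abs_rpow_le (α := a + h / 2) (β := a + h)
    hpq (by linarith) (continuous_sub_right (a + h)).continuousOn
    (integral_abs_sub_right_rpow (by linarith [hpq.pos]) (by linarith))
    (hg.mono_measure (Measure.restrict_mono (Ioc_subset_Ioc (by linarith) le_rfl) le_rfl))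
    (by fun_prop) (fun u hu => hbound u ⟨by linarith [hu.1], hu.2⟩)
    (by rw [hlen]; exact integral_chord_right_half hh.ne') (by positivity)

theorem abs_midpoint_sub_average_le {f f' : ℝ → ℝ} {a h B₁ B₂ : ℝ} (hh : 0 < h)
    (hf : ∀ x ∈ Icc a (a + h), HasDerivAt f (f' x) x)
    (hf' : IntervalIntegrable f' volume a (a + h))
    (h₁ : |∫ u in a..a + h / 2, (u - a) * f' u| ≤ B₁)
    (h₂ : |∫ u in a + h / 2..a + h, (u - (a + h)) * f' u| ≤ B₂) :
    |f (a + h / 2) - 1 / h * ∫ u in a..a + h, f u| ≤ (B₁ + B₂) / h := by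
  have hid := montgomery_identity (m := a + h / 2) (by linarith) (by linarith) hf hf'
  rw [add_sub_cancel_left] at hid
  have hmul : f (a + h / 2) - 1 / h * ∫ u in a..a + h, f u =
      ((∫ u in a..a + h / 2, (u - a) * f' u) +
        ∫ u in a + h / 2..a + h, (u - (a + h)) * f' u) / h := by
    rw [← hid]
    field_simp
  rw [hmul, abs_div, abs_of_pos hh]
  gcongr
  exact (abs_add_le _ _).trans (add_le_add h₁ h₂)

theorem midpoint_preinvex_holder_general
    (A : Set ℝ) (η : ℝ → ℝ → ℝ) (a b p q : ℝ) (f f' : ℝ → ℝ)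
    (hinv : ∀ x ∈ A, ∀ y ∈ A, ∀ t ∈ Icc (0:ℝ) 1, x + t * η y x ∈ A)
    (hC : ∀ x ∈ A, ∀ y ∈ A, ∀ t ∈ Icc (0:ℝ) 1,
      η y (y + t * η x y) = -t * η x y ∧ η x (y + t * η x y) = (1 - t) * η x y)
    (ha : a ∈ A) (hb : b ∈ A) (hab : a < a + η b a)
    (hf : ∀ x ∈ A, HasDerivAt f (f' x) x)
    (hint : IntervalIntegrable f' volume a (a + η b a))
    (hq : 1 < q) (hpq : 1 / p + 1 / q = 1)
    (hpre : ∀ x ∈ Icc a (a + η b a), ∀ y ∈ Icc a (a + η b a), ∀ t ∈ Icc (0:ℝ) 1,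
      |f' (x + t * η y x)| ^ q ≤ (1 - t) * |f' x| ^ q + t * |f' y| ^ q) :
    |f (a + η b a / 2) - (1 / η b a) * ∫ u in a..(a + η b a), f u| ≤
      (1 / (p + 1)) ^ (1 / p) * (η b a / 4) *
        (((3 * |f' a| ^ q + |f' (a + η b a)| ^ q) / 4) ^ (1 / q) +
         ((3 * |f' (a + η b a)| ^ q + |f' a| ^ q) / 4) ^ (1 / q)) := by
  have hsub : Icc a (a + η b a) ⊆ A := IsInvex.Icc_subset hinv ha hb (by linarith)
  have hη : η a (a + η b a) = -η b a := by
    simpa only [one_mul, neg_mul] using (hC b hb a ha 1 ⟨zero_le_one, le_rfl⟩).1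
  generalize η b a = h at *
  have hh : 0 < h := by linarith
  have hpq' : p.HolderConjugate q :=
    (Real.holderConjugate_iff.2 ⟨hq, by simpa only [one_div, add_comm] using hpq⟩).symm
  have hbound : ∀ u ∈ Icc a (a + h), |f' u| ^ q ≤
      ((a + h - u) * |f' a| ^ q + (u - a) * |f' (a + h)| ^ q) / h := fun u hu =>
    PreinvexOn.le_chord (g := fun x => |f' x| ^ q) hpre hh hη hu
  have hA : 0 ≤ |f' a| ^ q := by positivity
  have hB : 0 ≤ |f' (a + h)| ^ q := by positivity
  refine (abs_midpoint_sub_average_le hh (fun x hx => hf x (hsub hx)) hint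
    (abs_integral_left_half_le hpq' hh hint.aestronglyMeasurable hbound hA hB)
    (abs_integral_right_half_le hpq' hh hint.aestronglyMeasurable hbound hA hB)).trans_eq ?_
  field_simp
  ring

theorem midpoint_preinvex_holder
    (A : Set ℝ) (η : ℝ → ℝ → ℝ) (a b p q : ℝ) (f f' : ℝ → ℝ)
    (hA : IsOpen A)
    (hinv : ∀ x ∈ A, ∀ y ∈ A, ∀ t ∈ Icc (0:ℝ) 1, x + t * η y x ∈ A)
    (hC : ∀ x ∈ A, ∀ y ∈ A, ∀ t ∈ Icc (0:ℝ) 1,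
      η y (y + t * η x y) = -t * η x y ∧ η x (y + t * η x y) = (1 - t) * η x y)
    (ha : a ∈ A) (hb : b ∈ A) (hab : a < a + η b a)
    (hf : ∀ x ∈ A, HasDerivAt f (f' x) x)
    (hint : IntervalIntegrable f' volume a (a + η b a))
    (hq : 1 < q) (hpq : 1 / p + 1 / q = 1)
    (hpre : ∀ x ∈ Icc a (a + η b a), ∀ y ∈ Icc a (a + η b a), ∀ t ∈ Icc (0:ℝ) 1,
      |f' (x + t * η y x)| ^ q ≤ (1 - t) * |f' x| ^ q + t * |f' y| ^ q) :
    |f (a + η b a / 2) - (1 / η b a) * ∫ u in a..(a + η b a), f u| ≤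
      (1 / (p + 1)) ^ (1 / p) * (η b a / 4) *
        (((3 * |f' a| ^ q + |f' (a + η b a)| ^ q) / 4) ^ (1 / q) +
         ((3 * |f' (a + η b a)| ^ q + |f' a| ^ q) / 4) ^ (1 / q)) :=
  midpoint_preinvex_holder_general A η a b p q f f' hinv hC ha hb hab hf hint hq hpq hpre
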